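/- arXiv:1206.2329 — 3 statements merged into one kernel-verified Lean document; each statement's English description precedes it below -/
import Mathlib

section
/- Comparison Lemma: Let β > 1, let s ≤ t be real numbers, let q > 0, and let h ∈ L¹([s,t]) be nonnegative. Let v : [s,t] → [0,∞) be absolutely continuous with v(s) ≤ q and v'(r) ≤ −h(r)·v(r)^β for almost every r ∈ [s,t] (i.e. v is a subsolution of y' = −h·y^β, y(s) = q). Then v(r) ≤ ( q^{−(β−1)} + (β−1)·∫_s^r h(τ)dτ )^{−1/(β−1)} for all r ∈ [s,t]. -/
/-!
Since `v' ≤ 0` a.e., `v` is nonincreasing, so it stays positive on `[s, r]` once `v r > 0`.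
There the substitution `w = v ^ (-(β - 1))` linearizes the differential inequality:
`w' = -(β - 1) v' v ^ (-β) ≥ (β - 1) h` a.e. As `w` is monotone, Lebesgue's bound
`∫_s^r w' ≤ w r - w s` gives `q ^ (-(β - 1)) + (β - 1) ∫_s^r h ≤ w r`; solve for `v r`.
-/

open MeasureTheory Set

theorem MonotoneOn.setIntegral_Ioc_le_sub_of_ae_le_deriv {w φ : ℝ → ℝ} {a b : ℝ} (hab : a ≤ b)
    (hw : MonotoneOn w (Icc a b)) (hφ : IntegrableOn φ (Ioc a b))
    (hle : ∀ᵐ x ∂volume.restrict (Ioc a b), φ x ≤ deriv w x) :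
    ∫ x in Ioc a b, φ x ≤ w b - w a := by
  rw [← uIcc_of_le hab] at hw
  have hmem := hw.intervalIntegral_deriv_mem_uIcc
  rw [uIcc_of_le (sub_nonneg.2 (hw left_mem_uIcc right_mem_uIcc hab)),
    intervalIntegral.integral_of_le hab] at hmem
  exact (setIntegral_mono_ae_restrict hφ hw.intervalIntegrable_deriv.1 hle).trans hmem.2

theorem antitoneOn_of_eq_add_integral_of_ae_nonpos {v v' : ℝ → ℝ} {s t : ℝ}
    (hint : IntegrableOn v' (Icc s t)) (hftc : ∀ r ∈ Icc s t, v r = v s + ∫ τ in Ioc s r, v' τ)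
    (hnonpos : ∀ᵐ r ∂volume.restrict (Icc s t), v' r ≤ 0) :
    AntitoneOn v (Icc s t) := by
  intro x hx y hy hxy
  have hsx : Ioc s x ⊆ Icc s t := Ioc_subset_Icc_self.trans (Icc_subset_Icc_right hx.2)
  have hxy' : Ioc x y ⊆ Icc s t := Ioc_subset_Icc_self.trans (Icc_subset_Icc hx.1 hy.2)
  have hsplit : ∫ τ in Ioc s y, v' τ = (∫ τ in Ioc s x, v' τ) + ∫ τ in Ioc x y, v' τ := by
    rw [← Ioc_union_Ioc_eq_Ioc hx.1 hxy]
    exact setIntegral_union (Ioc_disjoint_Ioc_of_le le_rfl) measurableSet_Ioc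
      (hint.mono_set hsx) (hint.mono_set hxy')
  have hneg : ∫ τ in Ioc x y, v' τ ≤ 0 :=
    setIntegral_nonpos_of_ae_restrict (ae_restrict_of_ae_restrict_of_subset hxy' hnonpos)
  rw [hftc x hx, hftc y hy, hsplit]
  linarith

theorem le_deriv_rpow_neg_of_hasDerivAt_le {v : ℝ → ℝ} {x d c β : ℝ} (hβ : 1 ≤ β)
    (hv : HasDerivAt v d x) (hpos : 0 < v x) (hd : d ≤ -c * v x ^ β) :
    (β - 1) * c ≤ deriv (fun y => v y ^ (-(β - 1))) x := by
  rw [(hv.rpow_const (Or.inl hpos.ne')).deriv]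
  have hpow : v x ^ (-(β - 1) - 1) * v x ^ β = 1 := by
    rw [← Real.rpow_add hpos]
    norm_num
  have hfac : 0 ≤ (β - 1) * v x ^ (-(β - 1) - 1) :=
    mul_nonneg (sub_nonneg.2 hβ) (Real.rpow_nonneg hpos.le _)
  calc (β - 1) * c = (β - 1) * v x ^ (-(β - 1) - 1) * (c * v x ^ β) := by
        linear_combination (-(β - 1) * c) * hpow
    _ ≤ (β - 1) * v x ^ (-(β - 1) - 1) * -d := by gcongr; linarith
    _ = d * -(β - 1) * v x ^ (-(β - 1) - 1) := by ring

theorem le_rpow_neg_inv_of_le_rpow_neg {x B a : ℝ} (hx : 0 ≤ x) (hB : 0 < B) (ha : 0 < a)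
    (h : B ≤ x ^ (-a)) : x ≤ B ^ (-1 / a) := by
  calc x = (x ^ (-a)) ^ (-1 / a) := by
        rw [← Real.rpow_mul hx, show -a * (-1 / a) = 1 by field_simp [ha.ne'], Real.rpow_one]
    _ ≤ B ^ (-1 / a) :=
        Real.rpow_le_rpow_of_nonpos hB h (div_nonpos_of_nonpos_of_nonneg (by norm_num) ha.le)

theorem rpow_neg_add_integral_le_of_hasDerivAt_le {v v' h : ℝ → ℝ} {β s r : ℝ} (hβ : 1 ≤ β)
    (hsr : s ≤ r) (hanti : AntitoneOn v (Icc s r)) (hvr : 0 < v r)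
    (hh : IntegrableOn h (Ioc s r)) (hv : ∀ᵐ x ∂volume.restrict (Ioc s r), HasDerivAt v (v' x) x)
    (hsub : ∀ᵐ x ∂volume.restrict (Ioc s r), v' x ≤ -h x * v x ^ β) :
    v s ^ (-(β - 1)) + (β - 1) * ∫ x in Ioc s r, h x ≤ v r ^ (-(β - 1)) := by
  have hpos : ∀ x ∈ Icc s r, 0 < v x := fun x hx =>
    hvr.trans_le (hanti hx (right_mem_Icc.2 hsr) hx.2)
  have hw : MonotoneOn (fun x => v x ^ (-(β - 1))) (Icc s r) := fun x hx y hy hxy =>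
    Real.rpow_le_rpow_of_nonpos (hpos y hy) (hanti hx hy hxy) (by linarith)
  have hderiv : ∀ᵐ x ∂volume.restrict (Ioc s r),
      (β - 1) * h x ≤ deriv (fun y => v y ^ (-(β - 1))) x := by
    filter_upwards [hv, hsub, ae_restrict_mem measurableSet_Ioc] with x hd hle hx
    exact le_deriv_rpow_neg_of_hasDerivAt_le hβ hd (hpos x (Ioc_subset_Icc_self hx)) hle
  have hint := hw.setIntegral_Ioc_le_sub_of_ae_le_deriv hsr (hh.const_mul (β - 1)) hderiv
  rw [integral_const_mul] at hint
  linarith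

theorem comparison_lemma_general
    (β s t q : ℝ) (hβ : 1 < β) (hq : 0 < q)
    (h v v' : ℝ → ℝ)
    (hh_int : IntegrableOn h (Icc s t))
    (hh_nonneg : ∀ r ∈ Icc s t, 0 ≤ h r)
    (hv_nonneg : ∀ r ∈ Icc s t, 0 ≤ v r)
    (hv'_int : IntegrableOn v' (Icc s t))
    (hv_deriv : ∀ᵐ r ∂(volume.restrict (Icc s t)), HasDerivAt v (v' r) r)
    (hv_ftc : ∀ r ∈ Icc s t, v r = v s + ∫ τ in Ioc s r, v' τ)
    (hsub : ∀ᵐ r ∂(volume.restrict (Icc s t)), v' r ≤ - h r * v r ^ β)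
    (hvs : v s ≤ q) :
    ∀ r ∈ Icc s t,
      v r ≤ (q ^ (-(β - 1)) + (β - 1) * ∫ τ in Ioc s r, h τ) ^ (-1 / (β - 1)) := by
  intro r hr
  have hsr : Icc s r ⊆ Icc s t := Icc_subset_Icc_right hr.2
  have hIoc : Ioc s r ⊆ Icc s t := Ioc_subset_Icc_self.trans hsr
  have hanti : AntitoneOn v (Icc s t) := by
    refine antitoneOn_of_eq_add_integral_of_ae_nonpos hv'_int hv_ftc ?_
    filter_upwards [hsub, ae_restrict_mem measurableSet_Icc] with x hx hmem
    linarith [mul_nonneg (hh_nonneg x hmem) (Real.rpow_nonneg (hv_nonneg x hmem) β)]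
  have hH : 0 ≤ ∫ τ in Ioc s r, h τ :=
    setIntegral_nonneg measurableSet_Ioc fun x hx => hh_nonneg x (hIoc hx)
  have hB : 0 < q ^ (-(β - 1)) + (β - 1) * ∫ τ in Ioc s r, h τ :=
    add_pos_of_pos_of_nonneg (Real.rpow_pos_of_pos hq _) (mul_nonneg (by linarith) hH)
  rcases (hv_nonneg r hr).eq_or_lt with hvr | hvr
  · exact hvr ▸ (Real.rpow_pos_of_pos hB _).le
  have hvs' : q ^ (-(β - 1)) ≤ v s ^ (-(β - 1)) :=
    Real.rpow_le_rpow_of_nonpos (hvr.trans_le (hanti (hsr (left_mem_Icc.2 hr.1)) hr hr.1)) hvs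
      (by linarith)
  have hkey := rpow_neg_add_integral_le_of_hasDerivAt_le hβ.le hr.1 (hanti.mono hsr) hvr
    (hh_int.mono_set hIoc) (ae_restrict_of_ae_restrict_of_subset hIoc hv_deriv)
    (ae_restrict_of_ae_restrict_of_subset hIoc hsub)
  exact le_rpow_neg_inv_of_le_rpow_neg hvr.le hB (by linarith) (by linarith)

/-- **Comparison Lemma.** Let `β > 1`, `s ≤ t`, `q > 0`, and let `h ∈ L¹([s,t])` be
nonnegative. Let `v : [s,t] → [0,∞)` be absolutely continuous (expressed via an a.e.
derivative `v'` together with the fundamental theorem of calculus) with `v s ≤ q` and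
`v' r ≤ -h r * v r ^ β` for a.e. `r ∈ [s,t]`. Then
`v r ≤ (q ^ (-(β-1)) + (β-1) * ∫_s^r h)^(-1/(β-1))` for all `r ∈ [s,t]`. -/
theorem comparison_lemma
    (β s t q : ℝ) (hβ : 1 < β) (hst : s ≤ t) (hq : 0 < q)
    (h v v' : ℝ → ℝ)
    (hh_int : IntegrableOn h (Icc s t))
    (hh_nonneg : ∀ r ∈ Icc s t, 0 ≤ h r)
    (hv_nonneg : ∀ r ∈ Icc s t, 0 ≤ v r)
    (hv'_int : IntegrableOn v' (Icc s t))
    (hv_deriv : ∀ᵐ r ∂(volume.restrict (Icc s t)), HasDerivAt v (v' r) r)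
    (hv_ftc : ∀ r ∈ Icc s t, v r = v s + ∫ τ in Ioc s r, v' τ)
    (hsub : ∀ᵐ r ∂(volume.restrict (Icc s t)), v' r ≤ - h r * v r ^ β)
    (hvs : v s ≤ q) :
    ∀ r ∈ Icc s t,
      v r ≤ (q ^ (-(β - 1)) + (β - 1) * ∫ τ in Ioc s r, h τ) ^ (-1 / (β - 1)) :=
  comparison_lemma_general β s t q hβ hq h v v' hh_int hh_nonneg hv_nonneg hv'_int hv_deriv hv_ftc
    hsub hvs
end

section
/- A priori bound for superlinear ODE subsolutions: Let β > 1, let p : ℝ → [0,∞) be right-continuous with left limits (càdlàg), let h ∈ C(ℝ) be positive, and assume ∫_s^t h(τ)dτ → ∞ as s → −∞, for every t ∈ ℝ. Suppose that for each s ∈ ℝ, v(·,s) : [s,∞) → [0,∞) is absolutely continuous on compact intervals and satisfies v'(r,s) ≤ −h(r)·v(r,s)^β + p(r) for almost every r ≥ s. Then for each t ∈ ℝ there exist s₀ = s₀(β,t,p,h) ≤ t and R = R(β,t,p,h) > 0, depending only on β, t, p and h (and not on the family v or its initial values), such that v(t,s) ≤ R for all s ≤ s₀. -/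
/-!
On `[t - 1, t]` we have `p ≤ C` and `h ≥ m > 0`, so wherever `v ≥ M := max 1 (2C/m)` the
subsolution satisfies `v' ≤ -c v^β` with `c = m/2`. The solution
`G(u) = ((β - 1) c (u - a))^(-1/(β - 1))` of `y' = -c y^β` is infinite at its pole `u = a`;
placing the pole at `a = t - δ` so close to `t` that `G ≥ M` on `(a, t]`, every `v` starts
below `G`, and after the last time `v ≤ G` we have `v' ≤ -c v^β ≤ -c G^β = G'`, whence
`v(t) ≤ G(t)`. Neither the pole nor `G(t)` depends on `v`.
-/

open MeasureTheory Set Filter Topology Metric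

lemma exists_mem_nhds_isBounded_image_of_continuousWithinAt_Ici_of_tendsto_Iio
    {α E : Type*} [TopologicalSpace α] [LinearOrder α] [OrderTopology α] [PseudoMetricSpace E]
    {f : α → E} {x : α} {l : E} (hr : ContinuousWithinAt f (Ici x) x)
    (hl : Tendsto f (𝓝[<] x) (𝓝 l)) : ∃ t ∈ 𝓝 x, Bornology.IsBounded (f '' t) := by
  refine ⟨f ⁻¹' (ball (f x) 1 ∪ ball l 1), ?_,
    (isBounded_ball.union isBounded_ball).subset (image_preimage_subset _ _)⟩
  rw [← nhdsLT_sup_nhdsGE, mem_sup]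
  exact ⟨mem_of_superset (hl (ball_mem_nhds _ one_pos)) fun _ h => Or.inr h,
    mem_of_superset (hr (ball_mem_nhds _ one_pos)) fun _ h => Or.inl h⟩

lemma neg_mul_rpow_add_le {β m k q C y : ℝ} (hβ : 1 ≤ β) (hm : 0 < m) (hmk : m ≤ k)
    (hq : q ≤ C) (hy : max 1 (2 * C / m) ≤ y) : -k * y ^ β + q ≤ -(m / 2) * y ^ β := by
  have hy1 : 1 ≤ y := le_of_max_le_left hy
  have hyβ : y ≤ y ^ β := Real.self_le_rpow_of_one_le hy1 hβ
  have hCy : C ≤ m / 2 * y ^ β := by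
    have := (div_le_iff₀ hm).1 ((le_of_max_le_right hy).trans hyβ)
    linarith
  have : m * y ^ β ≤ k * y ^ β := mul_le_mul_of_nonneg_right hmk (by linarith)
  linarith

lemma le_right_of_le_left_of_increment_le {f g : ℝ → ℝ} {a b : ℝ} (hab : a ≤ b)
    (hf : ContinuousOn f (Icc a b)) (hg : ContinuousOn g (Icc a b)) (ha : f a ≤ g a)
    (hstep : ∀ r ∈ Icc a b, (∀ u ∈ Ioc r b, g u < f u) → f b - f r ≤ g b - g r) :
    f b ≤ g b := by
  set A := {x ∈ Icc a b | f x ≤ g x}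
  have hbdd : BddAbove A := bddAbove_Icc.mono (sep_subset _ _)
  have hlast : sSup A ∈ A :=
    (isClosed_Icc.isClosed_le hf hg).csSup_mem ⟨a, left_mem_Icc.2 hab, ha⟩ hbdd
  have hafter : ∀ u ∈ Ioc (sSup A) b, g u < f u := fun u hu =>
    not_le.1 fun hfg => hu.1.not_ge (le_csSup hbdd ⟨⟨hlast.1.1.trans hu.1.le, hu.2⟩, hfg⟩)
  linarith [hstep _ hlast.1 hafter, hlast.2]

section EqAddIntegral

variable {f f' : ℝ → ℝ} {s T : ℝ}

lemma continuousOn_of_eq_add_integral (hf : ∀ r ∈ Icc s T, f r = f s + ∫ τ in Ioc s r, f' τ)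
    (hf' : IntegrableOn f' (Icc s T)) : ContinuousOn f (Icc s T) :=
  (continuousOn_const.add (intervalIntegral.continuousOn_primitive hf')).congr hf

lemma sub_eq_integral_of_eq_add_integral
    (hf : ∀ r ∈ Icc s T, f r = f s + ∫ τ in Ioc s r, f' τ) (hf' : IntegrableOn f' (Icc s T))
    {x : ℝ} (hx : x ∈ Icc s T) :
    f T - f x = ∫ τ in Ioc x T, f' τ := by
  have hint : ∀ y ∈ Icc s T, IntervalIntegrable f' volume s y := fun y hy =>
    (intervalIntegrable_iff_integrableOn_Icc_of_le hy.1).2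
      (hf'.mono_set (Icc_subset_Icc_right hy.2))
  rw [hf T (right_mem_Icc.2 (hx.1.trans hx.2)), hf x hx, ← intervalIntegral.integral_of_le hx.1,
    ← intervalIntegral.integral_of_le (hx.1.trans hx.2), ← intervalIntegral.integral_of_le hx.2,
    ← intervalIntegral.integral_interval_sub_left (hint T (right_mem_Icc.2 (hx.1.trans hx.2)))
      (hint x hx)]
  ring

end EqAddIntegral

section Blowup

noncomputable def blowup (β c x : ℝ) : ℝ := ((β - 1) * c * x) ^ (-(β - 1)⁻¹)

variable {β c : ℝ}

lemma blowup_pos (hβ : 1 < β) (hc : 0 < c) {x : ℝ} (hx : 0 < x) : 0 < blowup β c x :=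
  Real.rpow_pos_of_pos (mul_pos (mul_pos (sub_pos.2 hβ) hc) hx) _

lemma hasDerivAt_blowup (hβ : 1 < β) (hc : 0 < c) {x : ℝ} (hx : 0 < x) :
    HasDerivAt (blowup β c) (-c * blowup β c x ^ β) x := by
  have hβ1 : β - 1 ≠ 0 := (sub_pos.2 hβ).ne'
  have hKx : 0 < (β - 1) * c * x := mul_pos (mul_pos (sub_pos.2 hβ) hc) hx
  convert ((hasDerivAt_id x).const_mul ((β - 1) * c)).rpow_const (p := -(β - 1)⁻¹)
    (Or.inl hKx.ne') using 1
  · rfl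
  rw [blowup, id, ← Real.rpow_mul hKx.le,
    show -(β - 1)⁻¹ * β = -(β - 1)⁻¹ - 1 by field_simp; ring]
  field_simp

lemma antitoneOn_blowup (hβ : 1 < β) (hc : 0 < c) : AntitoneOn (blowup β c) (Ioi 0) :=
  fun x hx y _ hxy => Real.rpow_le_rpow_of_nonpos (mul_pos (mul_pos (sub_pos.2 hβ) hc) hx)
    (by gcongr) (neg_nonpos.2 (inv_nonneg.2 (sub_pos.2 hβ).le))

lemma tendsto_blowup_nhdsGT_zero (hβ : 1 < β) (hc : 0 < c) :
    Tendsto (blowup β c) (𝓝[>] 0) atTop := by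
  have hK : 0 < (β - 1) * c := mul_pos (sub_pos.2 hβ) hc
  refine ((tendsto_rpow_neg_nhdsGT_zero (neg_lt_zero.2 (inv_pos.2 (sub_pos.2 hβ)))).const_mul_atTop
    (Real.rpow_pos_of_pos hK (-(β - 1)⁻¹))).congr' ?_
  filter_upwards [self_mem_nhdsWithin] with x hx
  exact (Real.mul_rpow hK.le (le_of_lt hx)).symm

theorem le_blowup_of_subsolution {M a t : ℝ} {w w' : ℝ → ℝ} (hβ : 1 < β) (hc : 0 < c)
    (hat : a < t) (hw : ContinuousOn w (Icc a t)) (hw' : IntegrableOn w' (Icc a t))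
    (hftc : ∀ x ∈ Icc a t, w t - w x = ∫ τ in Ioc x t, w' τ)
    (hsub : ∀ᵐ τ ∂volume.restrict (Ioc a t), M ≤ w τ → w' τ ≤ -c * w τ ^ β)
    (hM : M ≤ blowup β c (t - a)) : w t ≤ blowup β c (t - a) := by
  set G := fun u => blowup β c (u - a)
  have hG : ∀ u ∈ Ioi a, HasDerivAt G (-c * G u ^ β) u := fun u hu =>
    (hasDerivAt_blowup hβ hc (sub_pos.2 hu)).comp_sub_const u a
  have hG_cont : ContinuousOn G (Ioi a) := fun u hu => (hG u hu).continuousAt.continuousWithinAt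
  have hG'_cont : ContinuousOn (fun u => -c * G u ^ β) (Ioi a) :=
    continuousOn_const.mul (hG_cont.rpow_const fun _ _ => Or.inr (by linarith))
  obtain ⟨B, hB⟩ := isCompact_Icc.bddAbove_image hw
  obtain ⟨x, hBx, hx0, hxt⟩ : ∃ x, B ≤ blowup β c x ∧ x ∈ Ioc 0 (t - a) :=
    (((tendsto_blowup_nhdsGT_zero hβ hc).eventually_ge_atTop B).and
      (Ioc_mem_nhdsGT (sub_pos.2 hat))).exists
  have hstart : Icc (a + x) t ⊆ Ioi a := fun u hu => (lt_add_of_pos_right a hx0).trans_le hu.1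
  refine le_right_of_le_left_of_increment_le (by linarith)
    (hw.mono (Icc_subset_Icc_left (by linarith))) (hG_cont.mono hstart) ?_ fun r hr hlt => ?_
  · refine (hB (mem_image_of_mem w ⟨by linarith, by linarith⟩)).trans ?_
    simpa [G] using hBx
  have har : a < r := hstart hr
  have hrt : Icc r t ⊆ Ioi a := fun u hu => har.trans_le hu.1
  have hdom : ∀ᵐ τ ∂volume.restrict (Ioc r t), w' τ ≤ -c * G τ ^ β := by
    filter_upwards [ae_restrict_of_ae_restrict_of_subset (Ioc_subset_Ioc_left har.le) hsub,
      ae_restrict_mem measurableSet_Ioc] with τ hτ hτ_mem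
    have hτa : 0 < τ - a := sub_pos.2 (har.trans hτ_mem.1)
    have hGM : M ≤ G τ :=
      hM.trans (antitoneOn_blowup hβ hc hτa (sub_pos.2 hat) (by linarith [hτ_mem.2]))
    calc w' τ ≤ -c * w τ ^ β := hτ (hGM.trans (hlt τ hτ_mem).le)
      _ ≤ -c * G τ ^ β := mul_le_mul_of_nonpos_left
          (Real.rpow_le_rpow (blowup_pos hβ hc hτa).le (hlt τ hτ_mem).le (by linarith))
          (by linarith)
  calc w t - w r = ∫ τ in Ioc r t, w' τ := hftc r ⟨har.le, hr.2⟩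
    _ ≤ ∫ τ in Ioc r t, -c * G τ ^ β :=
        integral_mono_ae (hw'.mono_set (Ioc_subset_Icc_self.trans (Icc_subset_Icc_left har.le)))
          (((hG'_cont.mono hrt).integrableOn_Icc).mono_set Ioc_subset_Icc_self) hdom
    _ = G t - G r := by
        rw [← intervalIntegral.integral_of_le hr.2]
        exact intervalIntegral.integral_eq_sub_of_hasDerivAt_of_le hr.2 (hG_cont.mono hrt)
          (fun u hu => hG u (hrt (Ioo_subset_Icc_self hu)))
          ((hG'_cont.mono hrt).intervalIntegrable_of_Icc hr.2)

end Blowup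

theorem apriori_bound_superlinear_general
    (β : ℝ) (hβ : 1 < β) (t : ℝ)
    (p : ℝ → ℝ)
    (hp_rc : ∀ x, ContinuousWithinAt p (Ici x) x)
    (hp_ll : ∀ x : ℝ, ∃ l : ℝ, Tendsto p (nhdsWithin x (Iio x)) (nhds l))
    (h : ℝ → ℝ) (hh_cont : Continuous h) (hh_pos : ∀ r, 0 < h r) :
    ∃ s₀ ≤ t, ∃ R > 0,
      ∀ v v' : ℝ → ℝ → ℝ,
        (∀ s r, s ≤ r → 0 ≤ v r s) →
        (∀ s T, s ≤ T → IntegrableOn (fun r => v' r s) (Icc s T)) →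
        (∀ s r, s ≤ r → v r s = v s s + ∫ τ in Ioc s r, v' τ s) →
        (∀ s, ∀ᵐ r ∂(volume.restrict (Ici s)), HasDerivAt (fun u => v u s) (v' r s) r) →
        (∀ s, ∀ᵐ r ∂(volume.restrict (Ici s)), v' r s ≤ - h r * v r s ^ β + p r) →
        ∀ s ≤ s₀, v t s ≤ R := by
  obtain ⟨C, hC⟩ : BddAbove (p '' Icc (t - 1) t) :=
    (Bornology.isBounded_image_of_isLocallyBounded_of_isCompact isCompact_Icc fun x =>
      (hp_ll x).elim fun _ ↦
        exists_mem_nhds_isBounded_image_of_continuousWithinAt_Ici_of_tendsto_Iio (hp_rc x)).bddAbove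
  obtain ⟨x₀, -, hx₀⟩ := isCompact_Icc.exists_isMinOn
    (nonempty_Icc.2 (by linarith : t - 1 ≤ t)) hh_cont.continuousOn
  set m := h x₀
  have hc : 0 < m / 2 := half_pos (hh_pos x₀)
  obtain ⟨δ, hMδ, hδ0, hδ1⟩ :
      ∃ δ, max 1 (2 * C / m) ≤ blowup β (m / 2) δ ∧ δ ∈ Ioc 0 1 :=
    (((tendsto_blowup_nhdsGT_zero hβ hc).eventually_ge_atTop _).and
      (Ioc_mem_nhdsGT one_pos)).exists
  refine ⟨t - δ, by linarith, blowup β (m / 2) δ, blowup_pos hβ hc hδ0, ?_⟩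
  intro v v' _ hv'_int hv_eq _ hv'_le s hs
  have hv : ∀ r ∈ Icc s t, v r s = v s s + ∫ τ in Ioc s r, v' τ s :=
    fun r hr => hv_eq s r hr.1
  have hv' := hv'_int s t (hs.trans (by linarith))
  have hsub : Icc (t - δ) t ⊆ Icc s t := Icc_subset_Icc_left hs
  have hbound := le_blowup_of_subsolution (M := max 1 (2 * C / m)) hβ hc (by linarith)
    ((continuousOn_of_eq_add_integral hv hv').mono hsub) (hv'.mono_set hsub)
    (fun x hx => sub_eq_integral_of_eq_add_integral hv hv' (hsub hx)) ?_ (by rwa [sub_sub_cancel])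
  · rwa [sub_sub_cancel] at hbound
  filter_upwards [ae_restrict_of_ae_restrict_of_subset (fun r hr => hs.trans hr.1.le) (hv'_le s),
    ae_restrict_mem measurableSet_Ioc] with τ hτ hτ_mem hMτ
  have hτI : τ ∈ Icc (t - 1) t := ⟨by linarith [hτ_mem.1], hτ_mem.2⟩
  exact hτ.trans
    (neg_mul_rpow_add_le hβ.le (hh_pos x₀) (hx₀ hτI) (hC (mem_image_of_mem p hτI)) hMτ)

/-- **A priori bound for superlinear ODE subsolutions.** Let `β > 1`, let `p : ℝ → [0,∞)`
be càdlàg, let `h` be continuous and positive with `∫_s^t h → ∞` as `s → -∞` for every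
`t`. Then for each `t` there exist `s₀ ≤ t` and `R > 0`, depending only on `β, t, p, h`
(they are chosen before any subsolution family is given), such that every nonnegative
family `v(·,s)` of locally absolutely continuous subsolutions of
`y' = -h·y^β + p` on `[s,∞)` satisfies `v(t,s) ≤ R` for all `s ≤ s₀`. -/
theorem apriori_bound_superlinear
    (β : ℝ) (hβ : 1 < β) (t : ℝ)
    (p : ℝ → ℝ) (hp_nonneg : ∀ r, 0 ≤ p r)
    (hp_rc : ∀ x, ContinuousWithinAt p (Ici x) x)
    (hp_ll : ∀ x : ℝ, ∃ l : ℝ, Tendsto p (nhdsWithin x (Iio x)) (nhds l))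
    (h : ℝ → ℝ) (hh_cont : Continuous h) (hh_pos : ∀ r, 0 < h r)
    (hh_div : ∀ u : ℝ, Tendsto (fun s => ∫ τ in Ioc s u, h τ) atBot atTop) :
    ∃ s₀ ≤ t, ∃ R > 0,
      ∀ v v' : ℝ → ℝ → ℝ,
        (∀ s r, s ≤ r → 0 ≤ v r s) →
        (∀ s T, s ≤ T → IntegrableOn (fun r => v' r s) (Icc s T)) →
        (∀ s r, s ≤ r → v r s = v s s + ∫ τ in Ioc s r, v' τ s) →
        (∀ s, ∀ᵐ r ∂(volume.restrict (Ici s)), HasDerivAt (fun u => v u s) (v' r s) r) →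
        (∀ s, ∀ᵐ r ∂(volume.restrict (Ici s)), v' r s ≤ - h r * v r s ^ β + p r) →
        ∀ s ≤ s₀, v t s ≤ R :=
  apriori_bound_superlinear_general β hβ t p hp_rc hp_ll h hh_cont hh_pos
end

section
/- Weak point attractors are weak interval attractors for order-preserving strongly mixing RDS: Let (Ω,F,P,{θ_t}_{t∈ℝ}) be an ergodic metric dynamical system, H a real separable Banach space with a normal cone H_+ and a positive-part map x ↦ x₊, and let φ be an order-preserving RDS on H over (Ω,{θ_t}) which is strongly mixing with some ergodic measure μ. Then every weak point random attractor for φ is a weak interval random attractor for φ; hence the two classes of random attractors coincide. -/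
open MeasureTheory ProbabilityTheory Filter
open scoped Classical NNReal ENNReal

/-- A metric dynamical system. -/
def IsMetricDynamicalSystem {Ω : Type*} [MeasurableSpace Ω]
    (P : Measure Ω) (θ : ℝ → Ω → Ω) : Prop :=
  Measurable (fun p : ℝ × Ω => θ p.1 p.2) ∧
  (∀ ω, θ 0 ω = ω) ∧
  (∀ s t ω, θ (t + s) ω = θ t (θ s ω)) ∧
  (∀ t, MeasurePreserving (θ t) P P)

/-- An ergodic metric dynamical system. -/
def IsErgodicMDS {Ω : Type*} [MeasurableSpace Ω]
    (P : Measure Ω) (θ : ℝ → Ω → Ω) : Prop :=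
  IsMetricDynamicalSystem P θ ∧
  ∀ B : Set Ω, MeasurableSet B → (∀ t, θ t ⁻¹' B = B) → P B = 0 ∨ P B = 1

/-- A random dynamical system on `H` over `(Ω, θ)`. -/
def IsRDS {Ω H : Type*} [MeasurableSpace Ω] [MeasurableSpace H]
    (θ : ℝ → Ω → Ω) (φ : ℝ≥0 → Ω → H → H) : Prop :=
  Measurable (fun p : ℝ≥0 × Ω × H => φ p.1 p.2.1 p.2.2) ∧
  (∀ ω x, φ 0 ω x = x) ∧
  (∀ (s t : ℝ≥0) (ω : Ω) (x : H), φ (t + s) ω x = φ t (θ (s : ℝ) ω) (φ s ω x))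

/-- A cone in a normed space: closed, convex, stable under nonnegative scaling, and
`H₊ ∩ (-H₊) = {0}`. -/
def IsCone {H : Type*} [NormedAddCommGroup H] [NormedSpace ℝ H] (Hp : Set H) : Prop :=
  IsClosed Hp ∧ Convex ℝ Hp ∧ (∀ c : ℝ, 0 ≤ c → ∀ x ∈ Hp, c • x ∈ Hp) ∧
  Hp ∩ {x | -x ∈ Hp} = {0}

/-- The partial order induced by a cone: `x ≤ y` iff `y - x ∈ H₊`. -/
def coneLE {H : Type*} [NormedAddCommGroup H] (Hp : Set H) (x y : H) : Prop :=
  y - x ∈ Hp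

/-- The order interval `[x,y]` induced by a cone. -/
def coneInterval {H : Type*} [NormedAddCommGroup H] (Hp : Set H) (x y : H) : Set H :=
  {z | coneLE Hp x z ∧ coneLE Hp z y}

/-- A normal cone: `0 ≤ x ≤ y` implies `‖x‖ ≤ c‖y‖` for some constant `c > 0`. -/
def IsNormalCone {H : Type*} [NormedAddCommGroup H] (Hp : Set H) : Prop :=
  ∃ c > (0 : ℝ), ∀ x y : H, x ∈ Hp → y - x ∈ Hp → ‖x‖ ≤ c * ‖y‖

/-- A positive-part map: `x₊ ≥ x` and `x₊ ≥ 0` for all `x`. -/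
def IsPositivePartMap {H : Type*} [NormedAddCommGroup H] (Hp : Set H)
    (pos : H → H) : Prop :=
  ∀ x, coneLE Hp x (pos x) ∧ pos x ∈ Hp

/-- The RDS `φ` is order-preserving w.r.t. the cone `H₊`. -/
def IsOrderPreservingRDS {Ω H : Type*} [NormedAddCommGroup H] (Hp : Set H)
    (φ : ℝ≥0 → Ω → H → H) : Prop :=
  ∀ (t : ℝ≥0) (ω : Ω) (x y : H), coneLE Hp x y → coneLE Hp (φ t ω x) (φ t ω y)

/-- Total variation distance between two measures. -/
noncomputable def tvDist {H : Type*} [MeasurableSpace H] (μ ν : Measure H) : ℝ≥0∞ :=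
  ⨆ A : {A : Set H // MeasurableSet A}, max (μ A.1 - ν A.1) (ν A.1 - μ A.1)

/-- The RDS `φ` is strongly mixing with ergodic measure `μ`: the law of `φ(t;·)x`
converges to `μ` in total variation as `t → ∞`, for every `x`. -/
def IsStronglyMixing {Ω H : Type*} [MeasurableSpace Ω] [MeasurableSpace H]
    (P : Measure Ω) (φ : ℝ≥0 → Ω → H → H) (μ : Measure H) : Prop :=
  ∀ x : H, Tendsto (fun t : ℝ≥0 => tvDist (P.map fun ω => φ t ω x) μ) atTop (nhds 0)

/-- Hausdorff semidistance `d(A,B) = sup_{a∈A} inf_{b∈B} ‖a-b‖`, `∞` if `A = ∅`. -/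
noncomputable def hausSemidist {H : Type*} [PseudoEMetricSpace H] (A B : Set H) : ℝ≥0∞ :=
  if A.Nonempty then ⨆ a ∈ A, EMetric.infEdist a B else ⊤

/-- A random closed set: a.s. closed, with `ω ↦ d(x, A ω)` measurable. -/
def IsRandomClosedSet {Ω H : Type*} [MeasurableSpace Ω] [PseudoEMetricSpace H]
    (P : Measure Ω) (A : Ω → Set H) : Prop :=
  (∀ᵐ ω ∂P, IsClosed (A ω)) ∧ ∀ x : H, Measurable fun ω => EMetric.infEdist x (A ω)

/-- A weak random attractor for `φ` attracting the class `𝒞` of deterministic sets: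
a random closed set, a.s. nonempty and compact, attracting every `B ∈ 𝒞` in probability,
and invariant. -/
def IsWeakRandomAttractor {Ω H : Type*} [MeasurableSpace Ω]
    [NormedAddCommGroup H] [MeasurableSpace H]
    (P : Measure Ω) (θ : ℝ → Ω → Ω) (φ : ℝ≥0 → Ω → H → H)
    (𝒞 : Set (Set H)) (A : Ω → Set H) : Prop :=
  IsRandomClosedSet P A ∧
  (∀ᵐ ω ∂P, (A ω).Nonempty ∧ IsCompact (A ω)) ∧
  (∀ B ∈ 𝒞, ∀ ε : ℝ≥0∞, 0 < ε →
    Tendsto (fun t : ℝ≥0 => P {ω | ε ≤ hausSemidist (φ t ω '' B) (A ω)})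
      atTop (nhds 0)) ∧
  (∀ t : ℝ≥0, ∀ᵐ ω ∂P, φ t ω '' A ω = A (θ (t : ℝ) ω))

/-- The class of singletons of `H` (for weak point random attractors). -/
def pointClass (H : Type*) : Set (Set H) := {B | ∃ x : H, B = {x}}

/-- The class of order intervals `[x,y]`, `x ≤ y` (for weak interval random attractors). -/
def intervalClass {H : Type*} [NormedAddCommGroup H] (Hp : Set H) : Set (Set H) :=
  {B | ∃ x y : H, coneLE Hp x y ∧ B = coneInterval Hp x y}

/-!
Normality of the cone puts the image of `[x, y]` under `φ(t, ω)` within distance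
`c ‖φ(t, ω) y - φ(t, ω) x‖` of `φ(t, ω) x`, so it suffices that the two ordered trajectories
from `x ≤ y` synchronize in probability. By tightness of `μ` both trajectories lie, with high
probability, in a compact set `K`, and by Hahn–Banach and compactness finitely many positive
functionals and levels detect every ordered pair in `K` at distance at least `r`: some level lies
between the values at the two points. A level separates the two trajectories only on the event
where the smaller one is below it and the larger one is not; since both laws converge to `μ` in
total variation, the probability of that event tends to zero.
-/

open Topology

section TotalVariation

variable {H : Type*} [MeasurableSpace H]

lemma tvDist_comm (ν₁ ν₂ : Measure H) : tvDist ν₁ ν₂ = tvDist ν₂ ν₁ := by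
  simp only [tvDist, max_comm]

lemma le_add_tvDist (ν₁ ν₂ : Measure H) {S : Set H} (hS : MeasurableSet S) :
    ν₁ S ≤ ν₂ S + tvDist ν₁ ν₂ := by
  rw [← tsub_le_iff_left]
  exact (le_max_left _ _).trans
    (le_iSup (fun A : {A : Set H // MeasurableSet A} =>
      max (ν₁ A.1 - ν₂ A.1) (ν₂ A.1 - ν₁ A.1)) ⟨S, hS⟩)

lemma measure_preimage_sdiff_le_tvDist_add {Ω : Type*} [MeasurableSpace Ω] {P : Measure Ω}
    [IsFiniteMeasure P] {X Y : Ω → H} (hX : Measurable X) (hY : Measurable Y) (ν : Measure H)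
    {T : Set H} (hT : MeasurableSet T) (hYX : Y ⁻¹' T ⊆ X ⁻¹' T) :
    P (X ⁻¹' T \ Y ⁻¹' T) ≤ tvDist (P.map X) ν + tvDist (P.map Y) ν := by
  rw [measure_sdiff_le_iff_le_add (hY hT).nullMeasurableSet hYX (measure_ne_top P _)]
  calc P (X ⁻¹' T) ≤ ν T + tvDist (P.map X) ν := by
        simpa only [Measure.map_apply hX hT] using le_add_tvDist (P.map X) ν hT
    _ ≤ (P (Y ⁻¹' T) + tvDist (P.map Y) ν) + tvDist (P.map X) ν := by
        gcongr
        simpa only [Measure.map_apply hY hT, tvDist_comm ν] using le_add_tvDist ν (P.map Y) hT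
    _ = P (Y ⁻¹' T) + (tvDist (P.map X) ν + tvDist (P.map Y) ν) := by ring

end TotalVariation

lemma exists_nat_lt_add_one_sub_le {R u v : ℝ} (hu : |u| ≤ R) (huv : u + 1 ≤ v) :
    ∃ j ∈ Finset.range (⌊2 * R⌋₊ + 1), u < j + 1 - R ∧ (j : ℝ) + 1 - R ≤ v := by
  obtain ⟨hRu, huR⟩ := abs_le.mp hu
  have hnonneg : 0 ≤ u + R := by linarith
  refine ⟨⌊u + R⌋₊, Finset.mem_range_succ_iff.mpr (Nat.floor_mono (by linarith)), ?_, ?_⟩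
  · linarith [Nat.lt_floor_add_one (u + R)]
  · linarith [Nat.floor_le hnonneg]

section Cone

variable {H : Type*} [NormedAddCommGroup H] [NormedSpace ℝ H] {Hp : Set H}

lemma IsCone.zero_mem (hcone : IsCone Hp) : (0 : H) ∈ Hp :=
  (hcone.2.2.2.symm ▸ Set.mem_singleton (0 : H) : (0 : H) ∈ Hp ∩ {x | -x ∈ Hp}).1

lemma IsCone.exists_clm_nonneg_one_lt (hcone : IsCone Hp) {v : H} (hv : v ∈ Hp)
    (hv0 : v ≠ 0) : ∃ g : H →L[ℝ] ℝ, (∀ w ∈ Hp, 0 ≤ g w) ∧ 1 < g v := by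
  have hnv : -v ∉ Hp := fun h => hv0 <| by
    rw [← Set.mem_singleton_iff, ← hcone.2.2.2]
    exact ⟨hv, h⟩
  obtain ⟨f, u, hfu, huf⟩ := geometric_hahn_banach_closed_point hcone.2.1 hcone.1 hnv
  have hu : 0 < u := by simpa using hfu 0 hcone.zero_mem
  -- `f < u` on a cone forces `f ≤ 0` there, by scaling.
  have hf : ∀ w ∈ Hp, 0 ≤ -f w := by
    intro w hw
    by_contra! hfw
    have hscaled := hfu _ (hcone.2.2.1 (u / f w) (div_nonneg hu.le (by linarith)) w hw)
    rw [map_smul, smul_eq_mul, div_mul_cancel₀ _ (by linarith)] at hscaled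
    exact lt_irrefl u hscaled
  have hfv : 0 < -f v := by rw [map_neg] at huf; linarith
  refine ⟨(2 / -f v) • -f, fun w hw => ?_, ?_⟩
  · exact mul_nonneg (div_nonneg zero_le_two hfv.le) (hf w hw)
  · show 1 < 2 / -f v * -f v
    rw [div_mul_cancel₀ _ hfv.ne']
    norm_num

lemma IsCone.exists_finset_clm_one_lt (hcone : IsCone Hp) {S : Set H} (hS : IsCompact S)
    (hSp : S ⊆ Hp) (hS0 : (0 : H) ∉ S) : ∃ G : Finset (H →L[ℝ] ℝ),
      (∀ g ∈ G, ∀ w ∈ Hp, 0 ≤ g w) ∧ ∀ w ∈ S, ∃ g ∈ G, 1 < g w := by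
  have hsep : ∀ v : S, ∃ g : H →L[ℝ] ℝ, (∀ w ∈ Hp, 0 ≤ g w) ∧ 1 < g v := fun v =>
    hcone.exists_clm_nonneg_one_lt (hSp v.2) (ne_of_mem_of_not_mem v.2 hS0)
  choose g hgpos hgv using hsep
  obtain ⟨I, hI⟩ := hS.elim_finite_subcover (fun v => g v ⁻¹' Set.Ioi 1)
    (fun v => isOpen_Ioi.preimage (g v).continuous)
    (fun w hw => Set.mem_iUnion.mpr ⟨⟨w, hw⟩, hgv ⟨w, hw⟩⟩)
  refine ⟨I.image g, ?_, fun w hw => ?_⟩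
  · simp only [Finset.mem_image]
    rintro _ ⟨v, -, rfl⟩
    exact hgpos v
  obtain ⟨v, hvI, hwv⟩ := Set.mem_iUnion₂.mp (hI hw)
  exact ⟨g v, Finset.mem_image_of_mem g hvI, hwv⟩

lemma IsCone.exists_finset_threshold (hcone : IsCone Hp) {K : Set H} (hK : IsCompact K)
    {r : ℝ} (hr : 0 < r) : ∃ Q : Finset ((H →L[ℝ] ℝ) × ℝ), (∀ q ∈ Q, ∀ w ∈ Hp, 0 ≤ q.1 w) ∧
      ∀ a ∈ K, ∀ b ∈ K, coneLE Hp a b → r ≤ ‖b - a‖ → ∃ q ∈ Q, q.1 a < q.2 ∧ q.2 ≤ q.1 b := by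
  set S := Hp ∩ {v | r ≤ ‖v‖} ∩ (fun p : H × H => p.2 - p.1) '' K ×ˢ K
  have hS : IsCompact S := ((hK.prod hK).image (by fun_prop)).inter_left
    (hcone.1.inter (isClosed_le continuous_const continuous_norm))
  obtain ⟨G, hGpos, hG⟩ := IsCone.exists_finset_clm_one_lt hcone hS (fun w hw => hw.1.1)
    (fun h => by simpa using hr.trans_le h.1.2)
  obtain ⟨C, hC⟩ := hK.isBounded.exists_norm_le
  refine ⟨G.biUnion fun g => (Finset.range (⌊2 * (‖g‖ * C)⌋₊ + 1)).image
    fun j : ℕ => (g, (j : ℝ) + 1 - ‖g‖ * C), ?_, ?_⟩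
  · simp only [Finset.mem_biUnion, Finset.mem_image]
    rintro _ ⟨g, hg, j, -, rfl⟩
    exact hGpos g hg
  · intro a ha b hb hab hba
    obtain ⟨g, hgG, hg⟩ := hG (b - a) ⟨⟨hab, hba⟩, (a, b), ⟨ha, hb⟩, rfl⟩
    have hga : |g a| ≤ ‖g‖ * C :=
      (g.le_opNorm a).trans (mul_le_mul_of_nonneg_left (hC a ha) (norm_nonneg g))
    rw [map_sub] at hg
    obtain ⟨j, hj, hlt, hle⟩ := exists_nat_lt_add_one_sub_le hga (v := g b) (by linarith)
    exact ⟨_, Finset.mem_biUnion.mpr ⟨g, hgG, Finset.mem_image_of_mem _ hj⟩, hlt, hle⟩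

end Cone

section Synchronization

variable {Ω H : Type*} [MeasurableSpace Ω] [NormedAddCommGroup H] [NormedSpace ℝ H]
  [MeasurableSpace H] {Hp : Set H}

lemma measure_le_norm_sub_le_tvDist [OpensMeasurableSpace H] {P : Measure Ω} [IsFiniteMeasure P]
    (ν : Measure H) {K : Set H} (hK : MeasurableSet K) {r : ℝ}
    {Q : Finset ((H →L[ℝ] ℝ) × ℝ)} (hQpos : ∀ q ∈ Q, ∀ w ∈ Hp, 0 ≤ q.1 w)
    (hQ : ∀ a ∈ K, ∀ b ∈ K, coneLE Hp a b → r ≤ ‖b - a‖ → ∃ q ∈ Q, q.1 a < q.2 ∧ q.2 ≤ q.1 b)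
    {X Y : Ω → H} (hX : Measurable X) (hY : Measurable Y) (hXY : ∀ ω, coneLE Hp (X ω) (Y ω)) :
    P {ω | r ≤ ‖Y ω - X ω‖} ≤
      2 * ν Kᶜ + (Q.card + 1) * (tvDist (P.map X) ν + tvDist (P.map Y) ν) := by
  set tvX := tvDist (P.map X) ν
  set tvY := tvDist (P.map Y) ν
  have hout : ∀ Z : Ω → H, Measurable Z → P (Z ⁻¹' Kᶜ) ≤ ν Kᶜ + tvDist (P.map Z) ν :=
    fun Z hZ => by
      simpa only [Measure.map_apply hZ hK.compl] using le_add_tvDist (P.map Z) ν hK.compl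
  have hcross : ∀ q ∈ Q,
      P (X ⁻¹' (q.1 ⁻¹' Set.Iio q.2) \ Y ⁻¹' (q.1 ⁻¹' Set.Iio q.2)) ≤ tvX + tvY := by
    intro q hq
    refine measure_preimage_sdiff_le_tvDist_add hX hY ν
      (q.1.continuous.measurable measurableSet_Iio) fun ω (hω : q.1 (Y ω) < q.2) => ?_
    have hmono := hQpos q hq _ (hXY ω)
    rw [map_sub] at hmono
    show q.1 (X ω) < q.2
    linarith
  have hincl : {ω | r ≤ ‖Y ω - X ω‖} ⊆ X ⁻¹' Kᶜ ∪ Y ⁻¹' Kᶜ ∪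
      ⋃ q ∈ Q, X ⁻¹' (q.1 ⁻¹' Set.Iio q.2) \ Y ⁻¹' (q.1 ⁻¹' Set.Iio q.2) := by
    intro ω hω
    by_cases hXK : X ω ∈ K
    · by_cases hYK : Y ω ∈ K
      · obtain ⟨q, hq, hXq, hqY⟩ := hQ _ hXK _ hYK (hXY ω) hω
        exact Or.inr (Set.mem_iUnion₂.mpr ⟨q, hq, hXq, not_lt.mpr hqY⟩)
      · exact Or.inl (Or.inr hYK)
    · exact Or.inl (Or.inl hXK)
  calc P {ω | r ≤ ‖Y ω - X ω‖}
      ≤ P (X ⁻¹' Kᶜ) + P (Y ⁻¹' Kᶜ) +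
          ∑ q ∈ Q, P (X ⁻¹' (q.1 ⁻¹' Set.Iio q.2) \ Y ⁻¹' (q.1 ⁻¹' Set.Iio q.2)) :=
        (measure_mono hincl).trans <| (measure_union_le _ _).trans <|
          add_le_add (measure_union_le _ _) (measure_biUnion_finset_le _ _)
    _ ≤ (ν Kᶜ + tvX) + (ν Kᶜ + tvY) + ∑ _q ∈ Q, (tvX + tvY) := by
        gcongr with q hq
        exacts [hout X hX, hout Y hY, hcross q hq]
    _ = 2 * ν Kᶜ + (Q.card + 1) * (tvX + tvY) := by
        rw [Finset.sum_const, nsmul_eq_mul]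
        ring

theorem tendstoInMeasure_sub_of_stronglyMixing [CompleteSpace H]
    [TopologicalSpace.SeparableSpace H] [BorelSpace H] {P : Measure Ω} [IsFiniteMeasure P]
    (hcone : IsCone Hp) {φ : ℝ≥0 → Ω → H → H}
    (hmeas : ∀ t z, Measurable fun ω => φ t ω z) (horder : IsOrderPreservingRDS Hp φ)
    {μ : Measure H} [IsFiniteMeasure μ] (hmix : IsStronglyMixing P φ μ)
    {x y : H} (hxy : coneLE Hp x y) :
    TendstoInMeasure P (fun t ω => φ t ω y - φ t ω x) atTop 0 := by
  rw [tendstoInMeasure_iff_dist]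
  intro r hr
  simp only [Pi.zero_apply, dist_zero_right]
  refine ENNReal.tendsto_nhds_zero.mpr fun κ hκ => ?_
  obtain ⟨K₀, hK, hK₀μ⟩ := exists_isCompact_closure_measure_compl_lt μ (κ / 2)
    (ENNReal.half_pos hκ.ne')
  set K := closure K₀
  have hKμ : μ Kᶜ * 2 < κ := by
    rw [← ENNReal.lt_div_iff_mul_lt (Or.inl two_ne_zero) (Or.inl ENNReal.ofNat_ne_top)]
    exact (measure_mono (Set.compl_subset_compl.mpr subset_closure)).trans_lt hK₀μ
  obtain ⟨Q, hQpos, hQ⟩ := hcone.exists_finset_threshold hK hr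
  have hlim : Tendsto (fun t => 2 * μ Kᶜ + (Q.card + 1) *
      (tvDist (P.map fun ω => φ t ω x) μ + tvDist (P.map fun ω => φ t ω y) μ))
      atTop (𝓝 (2 * μ Kᶜ)) := by
    simpa using tendsto_const_nhds.add
      (ENNReal.Tendsto.const_mul ((hmix x).add (hmix y)) (Or.inr (by simp)))
  filter_upwards [hlim.eventually_lt_const (by rwa [mul_comm])] with t ht
  exact (measure_le_norm_sub_le_tvDist μ hK.isClosed.measurableSet hQpos hQ (hmeas t x)
    (hmeas t y) fun ω => horder t ω x y hxy).trans ht.le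

end Synchronization

lemma IsRDS.measurable_apply {Ω H : Type*} [MeasurableSpace Ω] [MeasurableSpace H]
    {θ : ℝ → Ω → Ω} {φ : ℝ≥0 → Ω → H → H} (hφ : IsRDS θ φ) (t : ℝ≥0) (z : H) :
    Measurable fun ω => φ t ω z :=
  hφ.1.comp (measurable_const.prodMk (measurable_id.prodMk measurable_const))

lemma tendsto_measure_le_of_le_add_mul {ι Ω : Type*} [MeasurableSpace Ω] {P : Measure Ω}
    {l : Filter ι} {U V W : ι → Ω → ℝ≥0∞} {C : ℝ≥0∞} (hC : C ≠ ⊤)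
    (hU : ∀ ε > 0, Tendsto (fun i => P {ω | ε ≤ U i ω}) l (𝓝 0))
    (hV : ∀ ε > 0, Tendsto (fun i => P {ω | ε ≤ V i ω}) l (𝓝 0))
    (hW : ∀ i ω, W i ω ≤ U i ω + C * V i ω) :
    ∀ ε > 0, Tendsto (fun i => P {ω | ε ≤ W i ω}) l (𝓝 0) := by
  intro ε hε
  have hε2 : 0 < ε / 2 := ENNReal.half_pos hε.ne'
  have hincl : ∀ i, {ω | ε ≤ W i ω} ⊆ {ω | ε / 2 ≤ U i ω} ∪ {ω | ε / 2 / C ≤ V i ω} := by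
    intro i ω hω
    by_contra! h
    simp only [Set.mem_union, Set.mem_ofPred_eq, not_or, not_le] at h
    have hCV : C * V i ω < ε / 2 := by
      rw [mul_comm, ← ENNReal.lt_div_iff_mul_lt (Or.inr h.2.ne_top) (Or.inl hC)]
      exact h.2
    exact lt_irrefl ε <| (hω.trans (hW i ω)).trans_lt <|
      (ENNReal.add_lt_add h.1 hCV).trans_eq (ENNReal.add_halves ε)
  refine tendsto_of_tendsto_of_tendsto_of_le_of_le tendsto_const_nhds
    (by simpa using (hU _ hε2).add (hV _ (ENNReal.div_pos hε2.ne' hC))) (fun _ => bot_le)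
    fun i => (measure_mono (hincl i)).trans (measure_union_le _ _)

lemma hausSemidist_singleton {H : Type*} [PseudoEMetricSpace H] (a : H) (A : Set H) :
    hausSemidist {a} A = Metric.infEDist a A := by
  rw [hausSemidist, if_pos (Set.singleton_nonempty a), iSup_singleton]
  rfl

section Attraction

variable {H : Type*} [NormedAddCommGroup H] {Hp : Set H}

lemma norm_sub_le_of_mem_coneInterval {c : ℝ}
    (hc : ∀ x y : H, x ∈ Hp → y - x ∈ Hp → ‖x‖ ≤ c * ‖y‖) {x y z : H}
    (hz : z ∈ coneInterval Hp x y) : ‖z - x‖ ≤ c * ‖y - x‖ :=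
  hc _ _ hz.1 (by simpa only [coneLE, sub_sub_sub_cancel_right] using hz.2)

lemma hausSemidist_image_coneInterval_le [NormedSpace ℝ H] (hcone : IsCone Hp) {c : ℝ}
    (hc₀ : 0 ≤ c) (hc : ∀ x y : H, x ∈ Hp → y - x ∈ Hp → ‖x‖ ≤ c * ‖y‖) {f : H → H}
    (hf : ∀ a b, coneLE Hp a b → coneLE Hp (f a) (f b)) {x y : H} (hxy : coneLE Hp x y)
    (A : Set H) :
    hausSemidist (f '' coneInterval Hp x y) A ≤
      Metric.infEDist (f x) A + ENNReal.ofReal c * ‖f y - f x‖ₑ := by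
  have hx : x ∈ coneInterval Hp x y := ⟨by simpa [coneLE] using hcone.zero_mem, hxy⟩
  rw [hausSemidist, if_pos ⟨f x, x, hx, rfl⟩]
  refine iSup₂_le ?_
  rintro _ ⟨z, hz, rfl⟩
  have hfz : f z ∈ coneInterval Hp (f x) (f y) := ⟨hf x z hz.1, hf z y hz.2⟩
  calc Metric.infEDist (f z) A ≤ Metric.infEDist (f x) A + ‖f z - f x‖ₑ := by
        rw [← edist_eq_enorm_sub]
        exact Metric.infEDist_le_infEDist_add_edist
    _ ≤ Metric.infEDist (f x) A + ENNReal.ofReal c * ‖f y - f x‖ₑ := by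
        rw [← ofReal_norm, ← ofReal_norm, ← ENNReal.ofReal_mul hc₀]
        gcongr
        exact norm_sub_le_of_mem_coneInterval hc hfz

end Attraction

theorem weak_point_attractor_is_weak_interval_attractor_general
    {Ω H : Type*} [MeasurableSpace Ω]
    [NormedAddCommGroup H] [NormedSpace ℝ H] [CompleteSpace H]
    [TopologicalSpace.SeparableSpace H] [MeasurableSpace H] [BorelSpace H]
    (P : Measure Ω) [IsProbabilityMeasure P]
    (θ : ℝ → Ω → Ω)
    (Hp : Set H) (hcone : IsCone Hp) (hnormal : IsNormalCone Hp)
    (φ : ℝ≥0 → Ω → H → H) (hφ : IsRDS θ φ)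
    (horder : IsOrderPreservingRDS Hp φ)
    (μ : Measure H) [IsProbabilityMeasure μ]
    (hmix : IsStronglyMixing P φ μ) :
    ∀ A : Ω → Set H,
      IsWeakRandomAttractor P θ φ (pointClass H) A →
      IsWeakRandomAttractor P θ φ (intervalClass Hp) A := by
  rintro A ⟨hclosed, hcompact, hpoint, hinv⟩
  refine ⟨hclosed, hcompact, ?_, hinv⟩
  rintro _ ⟨x, y, hxy, rfl⟩
  obtain ⟨c, hc₀, hc⟩ := hnormal
  have hsync := tendstoInMeasure_sub_of_stronglyMixing hcone hφ.measurable_apply horder hmix hxy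
  refine tendsto_measure_le_of_le_add_mul ENNReal.ofReal_ne_top ?_ ?_
    fun t ω => hausSemidist_image_coneInterval_le hcone hc₀.le hc (horder t ω) hxy (A ω)
  · simpa only [Set.image_singleton, hausSemidist_singleton] using hpoint {x} ⟨x, rfl⟩
  · simpa only [TendstoInMeasure, Pi.zero_apply, edist_zero_right] using hsync

/-- **Weak point attractors are weak interval attractors for order-preserving strongly
mixing RDS.** Let `(Ω,F,P,θ)` be an ergodic metric dynamical system, `H` a real separable
Banach space with a normal cone `H₊` and a positive-part map, and let `φ` be an
order-preserving RDS on `H` which is strongly mixing with some ergodic measure `μ`. Then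
every weak point random attractor for `φ` is a weak interval random attractor for `φ`. -/
theorem weak_point_attractor_is_weak_interval_attractor
    {Ω H : Type*} [MeasurableSpace Ω]
    [NormedAddCommGroup H] [NormedSpace ℝ H] [CompleteSpace H]
    [TopologicalSpace.SeparableSpace H] [MeasurableSpace H] [BorelSpace H]
    (P : Measure Ω) [IsProbabilityMeasure P]
    (θ : ℝ → Ω → Ω) (hθ : IsErgodicMDS P θ)
    (Hp : Set H) (hcone : IsCone Hp) (hnormal : IsNormalCone Hp)
    (pos : H → H) (hpos : IsPositivePartMap Hp pos)
    (φ : ℝ≥0 → Ω → H → H) (hφ : IsRDS θ φ)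
    (horder : IsOrderPreservingRDS Hp φ)
    (μ : Measure H) [IsProbabilityMeasure μ]
    (hmix : IsStronglyMixing P φ μ) :
    ∀ A : Ω → Set H,
      IsWeakRandomAttractor P θ φ (pointClass H) A →
      IsWeakRandomAttractor P θ φ (intervalClass Hp) A :=
  weak_point_attractor_is_weak_interval_attractor_general P θ Hp hcone hnormal φ hφ horder μ hmix
end
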